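/- In one dimension, the pre-wavelets of level t span the L²-orthogonal complement of V_{t−1} within V_t: V_t = V_{t−1} ⊕ W_t where W_t = span{φ_{t,i} : i ∈ Ξ_t}, the sum being L²-orthogonal, and dim W_t = 2^t. -/

import Mathlib

open MeasureTheory intervalIntegral

/-- Hat function of level `t` at node `2^{-(t+1)} i`. -/
noncomputable def hat (t i : ℕ) (x : ℝ) : ℝ :=
  max 0 (1 - |x * 2 ^ (t + 1) - (i : ℝ)|)

/-- Index set `I_t = {1,…,2^{t+1}-1}`. -/
def Idx (t : ℕ) : Finset ℕ := Finset.Icc 1 (2 ^ (t + 1) - 1)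

/-- Hierarchical complement index set `Ξ_t` (odd indices for `t ≥ 1`, `{1}` for `t = 0`). -/
def Xi (t : ℕ) : Finset ℕ := if t = 0 then {1} else (Idx t).filter (fun i => Odd i)

/-- One-dimensional pre-wavelet `φ_{t,i}` with boundary modification. -/
noncomputable def prew (t i : ℕ) (x : ℝ) : ℝ :=
  if t = 0 then hat 0 1 x
  else if i = 1 then 9/10 * hat t 1 x - 3/5 * hat t 2 x + 1/10 * hat t 3 x
  else if i = 2 ^ (t + 1) - 1 then
    9/10 * hat t i x - 3/5 * hat t (i-1) x + 1/10 * hat t (i-2) x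
  else hat t i x - 3/5 * (hat t (i+1) x + hat t (i-1) x)
    + 1/10 * (hat t (i+2) x + hat t (i-2) x)


/-- `V_t`: span of the hat functions of level `t`. -/
noncomputable def Vsp (t : ℕ) : Submodule ℝ (ℝ → ℝ) :=
  Submodule.span ℝ {f | ∃ i ∈ Idx t, f = hat t i}

/-- `W_t`: span of the pre-wavelets of level `t`. -/
noncomputable def Wsp (t : ℕ) : Submodule ℝ (ℝ → ℝ) :=
  Submodule.span ℝ {f | ∃ i ∈ Xi t, f = prew t i}

/-!
Everything is computed through the tent function `tent z = max 0 (1 - |z|)`, of which every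
hat function is a dilated translate. The level-`t` Gram matrix is tridiagonal with entries
`(2/3, 1/6) / 2^(t+1)`, and the two-scale relation `φ_{t,j} = ½ φ_{t+1,2j-1} + φ_{t+1,2j} +
½ φ_{t+1,2j+1}` turns it into the mixed Gram sequence
`2^(t+2) ⟨φ_{t+1,a}, φ_{t,j}⟩ = m(a - 2j)` with `m = (1/12, 1/2, 5/6, 1/2, 1/12)`.
Each pre-wavelet is a short stencil of hats centred at an odd node, and each of the three
stencils (left boundary, interior, right boundary) annihilates `m` at odd offsets: this is the
orthogonality. Since the elements of `V_t` are continuous and determined by their values at the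
nodes, orthogonality forces `V_t ∩ W_{t+1} = 0`. At the odd nodes the pre-wavelets form a
strictly diagonally dominant matrix (diagonal `≥ 9/10`, at most two off-diagonal entries `1/10`
per row), so they are independent and `dim W_{t+1} = 2^(t+1)`; together with
`dim V_t = 2^(t+1) - 1` this fills `V_{t+1}`.
-/

open Set Function

lemma integral_sum_smul_mul {ι : Type*} (s : Finset ι) (c : ι → ℝ) {f : ι → ℝ → ℝ} {g : ℝ → ℝ}
    (hf : ∀ i ∈ s, Continuous (f i)) (hg : Continuous g) (a b : ℝ) :
    ∫ x in a..b, (∑ i ∈ s, c i • f i) x * g x = ∑ i ∈ s, c i * ∫ x in a..b, f i x * g x := by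
  simp only [Finset.sum_apply, Pi.smul_apply, smul_eq_mul, Finset.sum_mul, mul_assoc]
  rw [intervalIntegral.integral_finsetSum fun i hi ↦
    Continuous.intervalIntegrable (by have := hf i hi; fun_prop) a b]
  simp only [intervalIntegral.integral_const_mul]

lemma integral_mul_sum_smul {ι : Type*} (s : Finset ι) (c : ι → ℝ) {f : ι → ℝ → ℝ} {g : ℝ → ℝ}
    (hf : ∀ i ∈ s, Continuous (f i)) (hg : Continuous g) (a b : ℝ) :
    ∫ x in a..b, g x * (∑ i ∈ s, c i • f i) x = ∑ i ∈ s, c i * ∫ x in a..b, g x * f i x := by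
  simp only [mul_comm (g _), integral_sum_smul_mul s c hf hg]

lemma eqOn_zero_of_integral_mul_self_eq_zero {f : ℝ → ℝ} {a b : ℝ} (hab : a ≤ b)
    (hf : Continuous f) (h : ∫ x in a..b, f x * f x = 0) : EqOn f 0 (Ioc a b) := by
  have hsq : (fun x ↦ f x * f x) =ᵐ[volume.restrict (Ioc a b)] 0 :=
    (intervalIntegral.integral_eq_zero_iff_of_le_of_nonneg_ae hab
      (Filter.Eventually.of_forall fun x ↦ mul_self_nonneg (f x))
      ((hf.mul hf).intervalIntegrable a b)).1 h
  intro x hx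
  exact mul_self_eq_zero.1 (Measure.eqOn_Ioc_of_ae_eq volume hsq (hf.mul hf).continuousOn
    continuousOn_const hx)

lemma linearIndependent_of_sum_abs_lt {ι X : Type*} [DecidableEq ι] (s : Finset ι)
    (v : ι → X → ℝ) (x : ι → X)
    (h : ∀ i ∈ s, ∑ k ∈ s.erase i, |v i (x k)| < |v i (x i)|) :
    LinearIndependent ℝ fun i : s ↦ v i := by
  let A : Matrix s s ℝ := fun i k ↦ v i (x k)
  have hA : A.det ≠ 0 := det_ne_zero_of_sum_row_lt_diag fun i ↦ by
    have := h i i.2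
    rw [Finset.sum_erase_eq_sub i.2] at this
    rw [Finset.sum_erase_eq_sub (Finset.mem_univ i)]
    simpa [A, Real.norm_eq_abs, Finset.sum_attach s fun k ↦ |v i (x k)|] using this
  exact LinearIndependent.of_comp (LinearMap.funLeft ℝ ℝ fun k : s ↦ x k)
    (Matrix.linearIndependent_rows_of_det_ne_zero hA)

lemma exists_eq_sum_smul_of_mem_span {ι M : Type*} [AddCommMonoid M] [Module ℝ M]
    {s : Finset ι} {v : ι → M} {f : M} (hf : f ∈ Submodule.span ℝ {f | ∃ i ∈ s, f = v i}) :
    ∃ c : ι → ℝ, f = ∑ i ∈ s, c i • v i := by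
  classical
  have hset : {f | ∃ i ∈ s, f = v i} = v '' s := by
    ext f; simp [eq_comm]
  rw [hset, Fintype.mem_span_image_iff_exists_fun] at hf
  obtain ⟨c, hc⟩ := hf
  refine ⟨fun i ↦ if h : i ∈ s then c ⟨i, h⟩ else 0, ?_⟩
  rw [← hc, ← Finset.sum_coe_sort s]
  exact Finset.sum_congr rfl fun i _ ↦ by simp

lemma span_setOf_eq_span_range {ι M : Type*} [AddCommMonoid M] [Module ℝ M] (s : Finset ι)
    (v : ι → M) :
    Submodule.span ℝ {f | ∃ i ∈ s, f = v i} = Submodule.span ℝ (range fun i : s ↦ v i) := by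
  congr 1; ext f; simp [eq_comm]

lemma finrank_span_setOf_eq_card {ι M : Type*} [AddCommGroup M] [Module ℝ M] (s : Finset ι)
    (v : ι → M) (hv : LinearIndependent ℝ fun i : s ↦ v i) :
    Module.finrank ℝ (Submodule.span ℝ {f | ∃ i ∈ s, f = v i}) = s.card := by
  rw [span_setOf_eq_span_range, finrank_span_eq_card hv, Fintype.card_coe]

noncomputable def tent (z : ℝ) : ℝ := max 0 (1 - |z|)

@[fun_prop]

lemma continuous_tent : Continuous tent := by
  unfold tent; fun_prop

lemma tent_eq_zero {z : ℝ} (h : 1 ≤ |z|) : tent z = 0 :=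
  max_eq_left (by linarith)

lemma tent_of_one_le {z : ℝ} (h : 1 ≤ z) : tent z = 0 :=
  tent_eq_zero (by rwa [abs_of_nonneg (by linarith)])

lemma tent_of_le_neg_one {z : ℝ} (h : z ≤ -1) : tent z = 0 :=
  tent_eq_zero (by rw [abs_of_nonpos (by linarith)]; linarith)

lemma tent_of_nonneg {z : ℝ} (h₀ : 0 ≤ z) (h₁ : z ≤ 1) : tent z = 1 - z := by
  rw [tent, abs_of_nonneg h₀, max_eq_right (by linarith)]

lemma tent_of_nonpos {z : ℝ} (h₀ : -1 ≤ z) (h₁ : z ≤ 0) : tent z = 1 + z := by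
  rw [tent, abs_of_nonpos h₁, max_eq_right (by linarith)]; ring

lemma support_tent : support tent ⊆ Ioo (-1) 1 := fun z hz ↦ by
  by_contra h
  exact hz (tent_eq_zero (by rw [mem_Ioo, ← abs_lt] at h; linarith))

lemma tent_div_two (z : ℝ) : tent (z / 2) = tent (z + 1) / 2 + tent z + tent (z - 1) / 2 := by
  rcases le_total z (-2) with h | h <;> rcases le_total z (-1) with h1 | h1 <;>
  rcases le_total z 0 with h2 | h2 <;> rcases le_total z 1 with h3 | h3 <;>
  rcases le_total z 2 with h4 | h4 <;>
  first
  | linarith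
  | simp (disch := grind) only [tent_of_one_le, tent_of_le_neg_one, tent_of_nonneg, tent_of_nonpos]
    linarith

lemma integral_tent_mul_eq_add {g : ℝ → ℝ} (hg : Continuous g) :
    ∫ u, tent u * g u = (∫ u in (-1 : ℝ)..0, tent u * g u) + ∫ u in (0 : ℝ)..1, tent u * g u := by
  have hint : ∀ a b : ℝ, IntervalIntegrable (fun u ↦ tent u * g u) volume a b :=
    fun a b ↦ (continuous_tent.mul hg).intervalIntegrable a b
  rw [intervalIntegral.integral_add_adjacent_intervals (hint _ _) (hint _ _),
    intervalIntegral.integral_eq_integral_of_support_subset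
      ((support_mul_subset_left _ _).trans (support_tent.trans Ioo_subset_Ioc_self))]

lemma integral_tent_mul_tent : ∫ u, tent u * tent u = 2 / 3 := by
  have h₁ : EqOn (fun u ↦ tent u * tent u) (fun u ↦ (u + 1) ^ 2) (uIcc (-1) 0) := fun u hu ↦ by
    rw [uIcc_of_le (by norm_num)] at hu
    simp only [tent_of_nonpos hu.1 hu.2]; ring
  have h₂ : EqOn (fun u ↦ tent u * tent u) (fun u ↦ (1 - u) ^ 2) (uIcc 0 1) := fun u hu ↦ by
    rw [uIcc_of_le (by norm_num)] at hu
    simp only [tent_of_nonneg hu.1 hu.2]; ring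
  rw [integral_tent_mul_eq_add continuous_tent, intervalIntegral.integral_congr h₁,
    intervalIntegral.integral_congr h₂]
  norm_num [intervalIntegral.integral_comp_add_right (fun u : ℝ ↦ u ^ 2),
    intervalIntegral.integral_comp_sub_left (fun u : ℝ ↦ u ^ 2)]

lemma integral_tent_mul_tent_sub_one : ∫ u, tent u * tent (u - 1) = 1 / 6 := by
  have h₁ : EqOn (fun u ↦ tent u * tent (u - 1)) (fun _ ↦ 0) (uIcc (-1) 0) := fun u hu ↦ by
    rw [uIcc_of_le (by norm_num)] at hu
    simp only [tent_of_le_neg_one (z := u - 1) (by linarith [hu.2]), mul_zero]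
  have h₂ : EqOn (fun u ↦ tent u * tent (u - 1)) (fun u ↦ u - u ^ 2) (uIcc 0 1) := fun u hu ↦ by
    rw [uIcc_of_le (by norm_num)] at hu
    simp only [tent_of_nonneg hu.1 hu.2,
      tent_of_nonpos (z := u - 1) (by linarith [hu.1]) (by linarith [hu.2])]
    ring
  rw [integral_tent_mul_eq_add (by fun_prop), intervalIntegral.integral_congr h₁,
    intervalIntegral.integral_congr h₂]
  norm_num [intervalIntegral.integral_sub, integral_pow, intervalIntegrable_pow]

lemma tent_mul_tent_sub_eq_zero {c : ℝ} (hc : 2 ≤ |c|) (u : ℝ) : tent u * tent (u - c) = 0 := by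
  rcases le_or_gt 1 |u| with hu | hu
  · rw [tent_eq_zero hu, zero_mul]
  · rw [tent_eq_zero (z := u - c) (by rw [abs_sub_comm]; linarith [abs_sub_abs_le_abs_sub c u]),
      mul_zero]

noncomputable def tentGram (d : ℤ) : ℝ :=
  if d = 0 then 2 / 3 else if d = 1 ∨ d = -1 then 1 / 6 else 0

lemma integral_tent_mul_tent_sub (d : ℤ) : ∫ u, tent u * tent (u - d) = tentGram d := by
  rcases (show d = 0 ∨ d = 1 ∨ d = -1 ∨ 2 ≤ |d| by
    rcases abs_cases d with ⟨h, _⟩ | ⟨h, _⟩ <;> omega) with rfl | rfl | rfl | hd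
  · simpa [tentGram] using integral_tent_mul_tent
  · simpa [tentGram] using integral_tent_mul_tent_sub_one
  · rw [← integral_sub_right_eq_self _ 1]
    simpa [tentGram, mul_comm] using integral_tent_mul_tent_sub_one
  · have hd' : (2 : ℝ) ≤ |(d : ℝ)| := by exact_mod_cast hd
    rw [tentGram, if_neg (by rintro rfl; simp at hd), if_neg (by rintro (rfl | rfl) <;> simp at hd)]
    simp [tent_mul_tent_sub_eq_zero hd']

lemma hat_eq_tent (t i : ℕ) (x : ℝ) : hat t i x = tent (x * 2 ^ (t + 1) - i) := rfl

@[fun_prop]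

lemma continuous_hat (t i : ℕ) : Continuous (hat t i) := by
  unfold hat; fun_prop

lemma mem_Idx {t i : ℕ} : i ∈ Idx t ↔ 1 ≤ i ∧ i + 1 ≤ 2 ^ (t + 1) := by
  have := Nat.one_le_two_pow (n := t + 1)
  rw [Idx, Finset.mem_Icc]; omega

lemma support_hat_subset {t i : ℕ} (hi : i ∈ Idx t) : support (hat t i) ⊆ Ioc 0 1 := by
  intro x hx
  have hN : (0 : ℝ) < 2 ^ (t + 1) := by positivity
  have hi' : (1 : ℝ) ≤ i ∧ (i : ℝ) + 1 ≤ 2 ^ (t + 1) := by exact_mod_cast mem_Idx.1 hi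
  have hx' : |x * 2 ^ (t + 1) - i| < 1 := by
    by_contra h
    exact hx (tent_eq_zero (not_lt.1 h))
  rw [abs_lt] at hx'
  constructor
  · by_contra h; nlinarith
  · by_contra h; nlinarith

lemma integral_hat_mul_hat {t a b : ℕ} (ha : a ∈ Idx t) :
    ∫ x in (0 : ℝ)..1, hat t a x * hat t b x = tentGram ((a : ℤ) - b) / 2 ^ (t + 1) := by
  rw [intervalIntegral.integral_eq_integral_of_support_subset
    ((support_mul_subset_left _ _).trans (support_hat_subset ha))]
  simp only [hat_eq_tent]
  rw [Measure.integral_comp_mul_right (fun y ↦ tent (y - a) * tent (y - b)),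
    ← integral_sub_right_eq_self (fun y ↦ tent (y - a) * tent (y - b)) (-(b : ℝ))]
  have hshift : (fun y : ℝ ↦ tent (y - -(b : ℝ) - a) * tent (y - -(b : ℝ) - b))
      = fun u ↦ tent u * tent (u - ((a : ℤ) - b : ℤ)) := by
    funext u; rw [mul_comm]; push_cast; ring_nf
  rw [hshift, integral_tent_mul_tent_sub, smul_eq_mul, abs_inv, abs_of_pos (by positivity)]
  ring

noncomputable def hatStencil {n : ℕ} (t b : ℕ) (c : Fin n → ℝ) : ℝ → ℝ :=
  ∑ k, c k • hat t (b + k)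

lemma hat_eq_hatStencil {t j : ℕ} (hj : 1 ≤ j) :
    hat t j = hatStencil (t + 1) (2 * j - 1) ![1 / 2, 1, 1 / 2] := by
  funext x
  have h := tent_div_two (x * 2 ^ (t + 2) - ((2 * j : ℕ) : ℝ))
  have h2j : ((2 * j - 1 : ℕ) : ℝ) = 2 * j - 1 := by rw [Nat.cast_sub (by omega)]; push_cast; ring
  simp only [hatStencil, Fin.sum_univ_three, Finset.sum_apply, Pi.smul_apply, smul_eq_mul,
    hat_eq_tent, Matrix.cons_val, Fin.val_zero, Fin.val_one, Fin.val_two, Nat.cast_add, h2j]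
  rw [show x * 2 ^ (t + 1) - j = (x * 2 ^ (t + 2) - ((2 * j : ℕ) : ℝ)) / 2 by push_cast; ring, h]
  push_cast
  ring_nf

noncomputable def mixedGram (e : ℤ) : ℝ := tentGram (e + 1) / 2 + tentGram e + tentGram (e - 1) / 2

lemma integral_hat_succ_mul_hat {t a j : ℕ} (ha : a ∈ Idx (t + 1)) (hj : 1 ≤ j) :
    ∫ x in (0 : ℝ)..1, hat (t + 1) a x * hat t j x = mixedGram ((a : ℤ) - 2 * j) / 2 ^ (t + 2) := by
  rw [hat_eq_hatStencil hj, hatStencil,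
    integral_mul_sum_smul _ _ (fun k _ ↦ continuous_hat _ _) (continuous_hat _ _)]
  have h2j : ((2 * j - 1 : ℕ) : ℤ) = 2 * j - 1 := by omega
  simp only [Fin.sum_univ_three, integral_hat_mul_hat ha, Matrix.cons_val, Fin.val_zero,
    Fin.val_one, Fin.val_two, Nat.cast_add, h2j, mixedGram]
  ring_nf

noncomputable def node (t k : ℕ) : ℝ := k / 2 ^ (t + 1)

lemma hat_apply_node (t i k : ℕ) : hat t i (node t k) = if i = k then 1 else 0 := by
  rw [hat_eq_tent, node, div_mul_cancel₀ _ (by positivity)]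
  split_ifs with h
  · simp [h, tent]
  · apply tent_eq_zero
    have : (1 : ℤ) ≤ |(k : ℤ) - i| := Int.one_le_abs (by omega)
    exact_mod_cast this

lemma node_mem_Ioc {t k : ℕ} (hk : k ∈ Idx t) : node t k ∈ Ioc 0 1 := by
  have hk' : (1 : ℝ) ≤ k ∧ (k : ℝ) + 1 ≤ 2 ^ (t + 1) := by exact_mod_cast mem_Idx.1 hk
  rw [node, mem_Ioc, div_le_one (by positivity)]
  exact ⟨div_pos (by linarith) (by positivity), by linarith⟩

lemma hatStencil_apply_node {n : ℕ} (t b m : ℕ) (c : Fin n → ℝ) :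
    hatStencil t b c (node t m) = ∑ k : Fin n, if b + (k : ℕ) = m then c k else 0 := by
  simp [hatStencil, hat_apply_node]

lemma mixedGram_eq_zero {e : ℤ} (he : 3 ≤ e ∨ e ≤ -3) : mixedGram e = 0 := by
  simp only [mixedGram, tentGram]
  rw [if_neg (by omega), if_neg (by omega), if_neg (by omega), if_neg (by omega),
    if_neg (by omega), if_neg (by omega)]
  ring

noncomputable def leftStencil : Fin 3 → ℝ := ![9 / 10, -3 / 5, 1 / 10]

noncomputable def rightStencil : Fin 3 → ℝ := ![1 / 10, -3 / 5, 9 / 10]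

noncomputable def interiorStencil : Fin 5 → ℝ := ![1 / 10, -3 / 5, 1, -3 / 5, 1 / 10]

lemma sum_leftStencil_mul_mixedGram {e : ℤ} (he : Odd e) (he' : e ≤ -1) :
    ∑ k, leftStencil k * mixedGram (e + k) = 0 := by
  obtain ⟨e, rfl⟩ := he
  rcases (show e = -1 ∨ e = -2 ∨ e ≤ -3 by omega) with rfl | rfl | he
  · norm_num [Fin.sum_univ_succ, leftStencil, mixedGram, tentGram]
  · norm_num [Fin.sum_univ_succ, leftStencil, mixedGram, tentGram]
  · have hzero : ∀ k : Fin 3, mixedGram (2 * e + 1 + k) = 0 := fun k ↦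
      mixedGram_eq_zero (by have := k.isLt; omega)
    simp [hzero]

lemma sum_rightStencil_mul_mixedGram {e : ℤ} (he : Odd e) (he' : -1 ≤ e) :
    ∑ k, rightStencil k * mixedGram (e + k) = 0 := by
  obtain ⟨e, rfl⟩ := he
  rcases (show e = -1 ∨ e = 0 ∨ 1 ≤ e by omega) with rfl | rfl | he
  · norm_num [Fin.sum_univ_succ, rightStencil, mixedGram, tentGram]
  · norm_num [Fin.sum_univ_succ, rightStencil, mixedGram, tentGram]
  · have hzero : ∀ k : Fin 3, mixedGram (2 * e + 1 + k) = 0 := fun k ↦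
      mixedGram_eq_zero (by omega)
    simp [hzero]

lemma sum_interiorStencil_mul_mixedGram {e : ℤ} (he : Odd e) :
    ∑ k, interiorStencil k * mixedGram (e + k) = 0 := by
  obtain ⟨e, rfl⟩ := he
  rcases (show e ∈ Finset.Icc (-3) 0 ∨ 1 ≤ e ∨ e ≤ -4 by rw [Finset.mem_Icc]; omega)
    with he | he | he
  · fin_cases he <;> norm_num [Fin.sum_univ_succ, interiorStencil, mixedGram, tentGram]
  all_goals
    have hzero : ∀ k : Fin 5, mixedGram (2 * e + 1 + k) = 0 := fun k ↦
      mixedGram_eq_zero (by have := k.isLt; omega)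
    simp [hzero]

lemma mem_Xi_succ {t i : ℕ} : i ∈ Xi (t + 1) ↔ Odd i ∧ i + 1 ≤ 2 ^ (t + 2) := by
  rw [Xi, if_neg (Nat.succ_ne_zero t), Finset.mem_filter, mem_Idx]
  constructor
  · rintro ⟨⟨-, h⟩, hodd⟩; exact ⟨hodd, h⟩
  · rintro ⟨⟨k, rfl⟩, h⟩; exact ⟨⟨by omega, h⟩, ⟨k, rfl⟩⟩

lemma hat_mem_Vsp {t i : ℕ} (hi : i ∈ Idx t) : hat t i ∈ Vsp t :=
  Submodule.subset_span ⟨i, hi, rfl⟩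

lemma hatStencil_mem_Vsp {n t b : ℕ} (c : Fin n → ℝ) (hb : 1 ≤ b) (hbn : b + n ≤ 2 ^ (t + 1)) :
    hatStencil t b c ∈ Vsp t :=
  Submodule.sum_mem _ fun k _ ↦ Submodule.smul_mem _ _ (hat_mem_Vsp (mem_Idx.2 (by omega)))

lemma prew_succ_one (t : ℕ) : prew (t + 1) 1 = hatStencil (t + 1) 1 leftStencil := by
  funext x
  rw [prew, if_neg (Nat.succ_ne_zero t), if_pos rfl]
  simp only [hatStencil, leftStencil, Finset.sum_apply, Pi.smul_apply, smul_eq_mul,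
    Fin.sum_univ_three, Matrix.cons_val, Fin.isValue, Fin.coe_ofNat_eq_mod, Nat.reduceMod]
  ring

lemma prew_succ_of_eq_last {t m : ℕ} (hm : 2 * m + 4 = 2 ^ (t + 2)) :
    prew (t + 1) (2 * m + 3) = hatStencil (t + 1) (2 * m + 1) rightStencil := by
  funext x
  have hN : 2 ^ (t + 1 + 1) = 2 ^ (t + 2) := rfl
  rw [prew, if_neg (Nat.succ_ne_zero t), if_neg (by omega), if_pos (by omega),
    show 2 * m + 3 - 1 = 2 * m + 2 by omega, show 2 * m + 3 - 2 = 2 * m + 1 by omega]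
  simp only [hatStencil, rightStencil, Finset.sum_apply, Pi.smul_apply, smul_eq_mul,
    Fin.sum_univ_three, Matrix.cons_val, Fin.isValue, Fin.coe_ofNat_eq_mod, Nat.reduceMod]
  ring

lemma prew_succ_of_ne_last {t m : ℕ} (hm : 2 * m + 4 ≠ 2 ^ (t + 2)) :
    prew (t + 1) (2 * m + 3) = hatStencil (t + 1) (2 * m + 1) interiorStencil := by
  funext x
  have hN : 2 ^ (t + 1 + 1) = 2 ^ (t + 2) := rfl
  rw [prew, if_neg (Nat.succ_ne_zero t), if_neg (by omega), if_neg (by omega),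
    show 2 * m + 3 - 1 = 2 * m + 2 by omega, show 2 * m + 3 - 2 = 2 * m + 1 by omega]
  simp only [hatStencil, interiorStencil, Finset.sum_apply, Pi.smul_apply, smul_eq_mul,
    Fin.sum_univ_five, Matrix.cons_val, Fin.isValue, Fin.coe_ofNat_eq_mod, Nat.reduceMod]
  ring

lemma prew_succ_eq_hatStencil {t i : ℕ} (hi : i ∈ Xi (t + 1)) :
    (i = 1 ∧ prew (t + 1) i = hatStencil (t + 1) 1 leftStencil) ∨
    (∃ m, i = 2 * m + 3 ∧ 2 * m + 4 = 2 ^ (t + 2) ∧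
      prew (t + 1) i = hatStencil (t + 1) (2 * m + 1) rightStencil) ∨
    (∃ m, i = 2 * m + 3 ∧ 2 * m + 6 ≤ 2 ^ (t + 2) ∧
      prew (t + 1) i = hatStencil (t + 1) (2 * m + 1) interiorStencil) := by
  obtain ⟨⟨k, rfl⟩, hk⟩ := mem_Xi_succ.1 hi
  have hN : 2 ^ (t + 2) = 4 * 2 ^ t := by ring
  rcases k with _ | m
  · exact Or.inl ⟨rfl, prew_succ_one t⟩
  · right
    rcases eq_or_ne (2 * m + 4) (2 ^ (t + 2)) with hm | hm
    · exact Or.inl ⟨m, by ring, hm, prew_succ_of_eq_last hm⟩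
    · exact Or.inr ⟨m, by ring, by omega, prew_succ_of_ne_last hm⟩

lemma prew_succ_mem_Vsp {t i : ℕ} (hi : i ∈ Xi (t + 1)) : prew (t + 1) i ∈ Vsp (t + 1) := by
  have hN : 2 ^ (t + 1 + 1) = 2 ^ (t + 2) := rfl
  have hN' : 2 ^ (t + 2) = 4 * 2 ^ t := by ring
  have hpos := Nat.one_le_two_pow (n := t)
  rcases prew_succ_eq_hatStencil hi with ⟨-, h⟩ | ⟨m, -, hm, h⟩ | ⟨m, -, hm, h⟩ <;>
    rw [h] <;> exact hatStencil_mem_Vsp _ (by omega) (by omega)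

lemma integral_hatStencil_mul_hat {n t b j : ℕ} (c : Fin n → ℝ) (hb : 1 ≤ b)
    (hbn : b + n ≤ 2 ^ (t + 2)) (hj : 1 ≤ j) :
    ∫ x in (0 : ℝ)..1, hatStencil (t + 1) b c x * hat t j x
      = (∑ k, c k * mixedGram ((b : ℤ) - 2 * j + k)) / 2 ^ (t + 2) := by
  rw [hatStencil, integral_sum_smul_mul _ _ (fun k _ ↦ continuous_hat _ _) (continuous_hat _ _),
    Finset.sum_div]
  refine Finset.sum_congr rfl fun k _ ↦ ?_
  have hN : 2 ^ (t + 1 + 1) = 2 ^ (t + 2) := rfl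
  rw [integral_hat_succ_mul_hat (mem_Idx.2 (by omega)) hj]
  push_cast
  ring_nf

lemma integral_prew_succ_mul_hat {t i j : ℕ} (hi : i ∈ Xi (t + 1)) (hj : j ∈ Idx t) :
    ∫ x in (0 : ℝ)..1, prew (t + 1) i x * hat t j x = 0 := by
  obtain ⟨hj₁, hj₂⟩ := mem_Idx.1 hj
  have hN : 2 ^ (t + 2) = 2 * 2 ^ (t + 1) := by ring
  rcases prew_succ_eq_hatStencil hi with ⟨-, h⟩ | ⟨m, -, hm, h⟩ | ⟨m, -, hm, h⟩ <;>
    rw [h, integral_hatStencil_mul_hat _ (by omega) (by omega) hj₁, div_eq_zero_iff] <;> left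
  · exact sum_leftStencil_mul_mixedGram ⟨-j, by push_cast; ring⟩ (by omega)
  · exact sum_rightStencil_mul_mixedGram ⟨m - j, by push_cast; ring⟩ (by omega)
  · exact sum_interiorStencil_mul_mixedGram ⟨m - j, by push_cast; ring⟩

lemma prew_succ_apply_node {t i m : ℕ} (hi : i ∈ Xi (t + 1)) (hm : m ∈ Xi (t + 1)) :
    prew (t + 1) i (node (t + 1) m)
      = if m = i then (if i = 1 ∨ i + 1 = 2 ^ (t + 2) then 9 / 10 else 1)
        else if m = i + 2 ∨ m + 2 = i then 1 / 10 else 0 := by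
  obtain ⟨⟨l, rfl⟩, hl⟩ := mem_Xi_succ.1 hm
  rcases prew_succ_eq_hatStencil hi with ⟨rfl, h⟩ | ⟨m, rfl, hm, h⟩ | ⟨m, rfl, hm, h⟩ <;>
    rw [h, hatStencil_apply_node]
  · simp only [leftStencil, Fin.sum_univ_three, Matrix.cons_val, Fin.isValue, Fin.coe_ofNat_eq_mod,
      Nat.reduceMod]
    split_ifs <;> first | omega | tauto | norm_num
  · simp only [rightStencil, Fin.sum_univ_three, Matrix.cons_val, Fin.isValue, Fin.coe_ofNat_eq_mod,
      Nat.reduceMod]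
    split_ifs <;> first | omega | tauto | norm_num
  · simp only [interiorStencil, Fin.sum_univ_five, Matrix.cons_val, Fin.isValue,
      Fin.coe_ofNat_eq_mod, Nat.reduceMod]
    split_ifs <;> first | omega | tauto | norm_num

lemma eq_sum_hat_of_mem_Vsp {t : ℕ} {f : ℝ → ℝ} (hf : f ∈ Vsp t) :
    f = ∑ k ∈ Idx t, f (node t k) • hat t k := by
  obtain ⟨c, rfl⟩ := exists_eq_sum_smul_of_mem_span hf
  refine Finset.sum_congr rfl fun k hk ↦ ?_
  simp [hat_apply_node, Finset.sum_apply, hk]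

lemma continuous_of_mem_Vsp {t : ℕ} {f : ℝ → ℝ} (hf : f ∈ Vsp t) : Continuous f := by
  rw [eq_sum_hat_of_mem_Vsp hf, Finset.sum_fn]
  exact continuous_finsetSum _ fun k _ ↦ (continuous_hat t k).const_smul _

lemma Vsp_le_succ (t : ℕ) : Vsp t ≤ Vsp (t + 1) := by
  refine Submodule.span_le.2 ?_
  rintro _ ⟨j, hj, rfl⟩
  obtain ⟨hj₁, hj₂⟩ := mem_Idx.1 hj
  rw [hat_eq_hatStencil hj₁]
  exact hatStencil_mem_Vsp _ (by omega) (by rw [pow_succ]; omega)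

lemma Wsp_succ_le_Vsp (t : ℕ) : Wsp (t + 1) ≤ Vsp (t + 1) :=
  Submodule.span_le.2 fun _ ⟨_, hi, hf⟩ ↦ hf ▸ prew_succ_mem_Vsp hi

lemma integral_mul_eq_zero_of_mem_Vsp_of_mem_Wsp {t : ℕ} {f g : ℝ → ℝ} (hf : f ∈ Vsp t)
    (hg : g ∈ Wsp (t + 1)) : ∫ x in (0 : ℝ)..1, f x * g x = 0 := by
  obtain ⟨b, rfl⟩ := exists_eq_sum_smul_of_mem_span hf
  obtain ⟨c, rfl⟩ := exists_eq_sum_smul_of_mem_span hg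
  have hprew : ∀ i ∈ Xi (t + 1), Continuous (prew (t + 1) i) := fun i hi ↦
    continuous_of_mem_Vsp (prew_succ_mem_Vsp hi)
  rw [integral_sum_smul_mul _ _ (fun j _ ↦ continuous_hat t j)
    (continuous_of_mem_Vsp (Wsp_succ_le_Vsp t hg))]
  refine Finset.sum_eq_zero fun j hj ↦ ?_
  rw [integral_mul_sum_smul _ _ hprew (continuous_hat t j)]
  simp_rw [mul_comm (hat t j _)]
  rw [Finset.sum_eq_zero fun i hi ↦ by rw [integral_prew_succ_mul_hat hi hj, mul_zero], mul_zero]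

lemma disjoint_Vsp_Wsp_succ (t : ℕ) : Disjoint (Vsp t) (Wsp (t + 1)) := by
  rw [Submodule.disjoint_def]
  intro f hfV hfW
  have hzero := eqOn_zero_of_integral_mul_self_eq_zero zero_le_one (continuous_of_mem_Vsp hfV)
    (integral_mul_eq_zero_of_mem_Vsp_of_mem_Wsp hfV hfW)
  rw [eq_sum_hat_of_mem_Vsp hfV]
  exact Finset.sum_eq_zero fun k hk ↦ by rw [hzero (node_mem_Ioc hk), Pi.zero_apply, zero_smul]

lemma linearIndependent_hat (t : ℕ) : LinearIndependent ℝ fun i : Idx t ↦ hat t i :=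
  linearIndependent_of_sum_abs_lt _ _ (node t) fun i _ ↦ by
    rw [Finset.sum_eq_zero fun k hk ↦ by
      rw [hat_apply_node, if_neg (Finset.ne_of_mem_erase hk).symm, abs_zero]]
    simp [hat_apply_node]

lemma linearIndependent_prew_succ (t : ℕ) :
    LinearIndependent ℝ fun i : Xi (t + 1) ↦ prew (t + 1) i := by
  refine linearIndependent_of_sum_abs_lt _ _ (node (t + 1)) fun i hi ↦ ?_
  have hoff : ∀ m ∈ (Xi (t + 1)).erase i, |prew (t + 1) i (node (t + 1) m)|
      = if m = i + 2 ∨ m + 2 = i then 1 / 10 else 0 := fun m hm ↦ by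
    rw [prew_succ_apply_node hi (Finset.mem_of_mem_erase hm), if_neg (Finset.ne_of_mem_erase hm)]
    split_ifs <;> norm_num
  have hcard : (((Xi (t + 1)).erase i).filter fun m ↦ m = i + 2 ∨ m + 2 = i).card ≤ 2 :=
    (Finset.card_le_card fun m hm ↦ by
      simp only [Finset.mem_filter, Finset.mem_erase, Finset.mem_insert,
        Finset.mem_singleton] at hm ⊢
      omega).trans
      (Finset.card_le_two (a := i + 2) (b := i - 2))
  have hdiag : 9 / 10 ≤ |prew (t + 1) i (node (t + 1) i)| := by
    rw [prew_succ_apply_node hi hi, if_pos rfl]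
    split_ifs <;> norm_num
  rw [Finset.sum_congr rfl hoff, ← Finset.sum_filter, Finset.sum_const, nsmul_eq_mul]
  have : (((((Xi (t + 1)).erase i).filter fun m ↦ m = i + 2 ∨ m + 2 = i).card : ℕ) : ℝ) ≤ 2 := by
    exact_mod_cast hcard
  linarith

instance (t : ℕ) : FiniteDimensional ℝ (Vsp t) := by
  rw [Vsp, span_setOf_eq_span_range]
  exact FiniteDimensional.span_of_finite ℝ (Set.finite_range _)

instance (t : ℕ) : FiniteDimensional ℝ (Wsp t) := by
  rw [Wsp, span_setOf_eq_span_range]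
  exact FiniteDimensional.span_of_finite ℝ (Set.finite_range _)

lemma card_Xi_succ (t : ℕ) : (Xi (t + 1)).card = 2 ^ (t + 1) := by
  have hN : 2 ^ (t + 2) = 2 * 2 ^ (t + 1) := by ring
  have : Xi (t + 1) = (Finset.range (2 ^ (t + 1))).image fun m ↦ 2 * m + 1 := by
    ext i
    simp only [mem_Xi_succ, Finset.mem_image, Finset.mem_range]
    constructor
    · rintro ⟨⟨m, rfl⟩, h⟩; exact ⟨m, by omega, rfl⟩
    · rintro ⟨m, hm, rfl⟩; exact ⟨⟨m, rfl⟩, by omega⟩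
  rw [this, Finset.card_image_of_injective _ fun a b h ↦ by omega, Finset.card_range]

lemma finrank_Vsp (t : ℕ) : Module.finrank ℝ (Vsp t) = 2 ^ (t + 1) - 1 := by
  rw [Vsp, finrank_span_setOf_eq_card _ _ (linearIndependent_hat t), Idx, Nat.card_Icc]
  omega

lemma finrank_Wsp_succ (t : ℕ) : Module.finrank ℝ (Wsp (t + 1)) = 2 ^ (t + 1) := by
  rw [Wsp, finrank_span_setOf_eq_card _ _ (linearIndependent_prew_succ t), card_Xi_succ]

/-- For `t ≥ 1`: `V_t = V_{t-1} ⊕ W_t`, the sum being direct and L²-orthogonal on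
`[0,1]`, with `dim W_t = 2^t`. -/
theorem prewavelet_complement (t : ℕ) (ht : 1 ≤ t) :
    Vsp (t - 1) ⊔ Wsp t = Vsp t ∧
    Disjoint (Vsp (t - 1)) (Wsp t) ∧
    (∀ f ∈ Vsp (t - 1), ∀ g ∈ Wsp t, ∫ x in (0:ℝ)..1, f x * g x = 0) ∧
    Module.finrank ℝ (Wsp t) = 2 ^ t := by
  obtain ⟨t, rfl⟩ : ∃ s, t = s + 1 := ⟨t - 1, by omega⟩
  rw [Nat.add_sub_cancel]
  have hdisj := disjoint_Vsp_Wsp_succ t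
  refine ⟨?_, hdisj, fun f hf g hg ↦ integral_mul_eq_zero_of_mem_Vsp_of_mem_Wsp hf hg,
    finrank_Wsp_succ t⟩
  refine Submodule.eq_of_le_of_finrank_le (sup_le (Vsp_le_succ t) (Wsp_succ_le_Vsp t)) ?_
  have hdim := Submodule.finrank_sup_add_finrank_inf_eq (Vsp t) (Wsp (t + 1))
  rw [hdisj.eq_bot, finrank_bot, finrank_Vsp, finrank_Wsp_succ] at hdim
  have hN : 2 ^ (t + 1 + 1) = 2 * 2 ^ (t + 1) := by ring
  have hpos := Nat.one_le_two_pow (n := t + 1)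
  rw [finrank_Vsp]
  omega
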